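/- Let X be a real-valued random variable whose law has a probability density function f supported on [0,1], and suppose f is symmetric around 1/2 (i.e., f(1/2 − ε) = f(1/2 + ε) for all ε ∈ [0, 1/2]). Then for every integer n ≥ 1, the n-th binary digit B_n(X) satisfies P[B_n(X) = 1] = 1/2 (equivalently, B_n(X) is Bernoulli(1/2)). -/

import Mathlib

/-!
Away from the dyadic rationals `k / 2^n`, a Lebesgue-null set, the reflection `x ↦ 1 - x` flips
the `n`-th binary digit: `⌊2^n (1 - x)⌋ = 2^n - 1 - ⌊2^n x⌋` and `2^n` is even. A density that is
symmetric about `1/2` makes the law of `X` invariant under this reflection, so the events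
`B_n = 1` and `B_n = 0` have the same probability, which must then be `1/2`.
-/

open MeasureTheory ProbabilityTheory Set

/-- The `i`-th binary digit of `x ∈ [0,1]`: `B_i(x) = ⌊2^i x⌋ mod 2`. -/
noncomputable def binDigit (i : ℕ) (x : ℝ) : ℤ := ⌊(2:ℝ)^i * x⌋ % 2

open scoped ENNReal

lemma measurable_binDigit (n : ℕ) : Measurable (binDigit n) :=
  (measurable_from_top (f := fun k : ℤ => k % 2)).comp
    (Int.measurable_floor.comp (measurable_const_mul _))

lemma binDigit_eq_zero_or_eq_one (n : ℕ) (x : ℝ) : binDigit n x = 0 ∨ binDigit n x = 1 :=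
  Int.emod_two_eq _

lemma binDigit_one_sub {n : ℕ} (hn : n ≠ 0) {x : ℝ} (hx : (2:ℝ)^n * x ∉ range Int.cast) :
    binDigit n (1 - x) = 1 - binDigit n x := by
  have hfloor : ⌊(2:ℝ)^n * (1 - x)⌋ = 2^n - ⌊(2:ℝ)^n * x⌋ - 1 := by
    rw [show (2:ℝ)^n * (1 - x) = ((2^n : ℤ) : ℝ) + -((2:ℝ)^n * x) by push_cast; ring,
      Int.floor_intCast_add, Int.floor_neg, (Int.ceil_eq_floor_add_one_iff_notMem _).mpr hx]
    ring
  have heven : (2:ℤ)^n % 2 = 0 := Int.emod_eq_zero_of_dvd (dvd_pow_self 2 hn)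
  unfold binDigit
  omega

lemma ae_two_pow_mul_notMem_range_intCast (n : ℕ) :
    ∀ᵐ x ∂(volume : Measure ℝ), (2:ℝ)^n * x ∉ range Int.cast := by
  have hcount : ((fun x : ℝ => (2:ℝ)^n * x) ⁻¹' range Int.cast).Countable :=
    (countable_range _).preimage (mul_right_injective₀ (by positivity))
  exact measure_eq_zero_iff_ae_notMem.mp (hcount.measure_zero _)

lemma preimage_one_sub_binDigit_eq_one_ae_eq_compl {μ : Measure ℝ} (hμ : μ ≪ volume) {n : ℕ}
    (hn : n ≠ 0) :
    (fun x => 1 - x) ⁻¹' {x | binDigit n x = 1} =ᵐ[μ] {x | binDigit n x = 1}ᶜ := by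
  refine Filter.eventuallyEq_set.mpr ?_
  filter_upwards [hμ.ae_le (ae_two_pow_mul_notMem_range_intCast n)] with x hx
  change binDigit n (1 - x) = 1 ↔ binDigit n x ≠ 1
  rw [binDigit_one_sub hn hx]
  have := binDigit_eq_zero_or_eq_one n x
  omega

lemma one_sub_comp_eq_of_symmetric {M : Type*} [Zero M] {f : ℝ → M}
    (hf_supp : ∀ x, x ∉ Icc (0:ℝ) 1 → f x = 0)
    (hsym : ∀ ε ∈ Icc (0:ℝ) (1/2), f (1/2 - ε) = f (1/2 + ε)) (x : ℝ) :
    f (1 - x) = f x := by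
  by_cases hx : x ∈ Icc (0:ℝ) 1
  · obtain ⟨hx0, hx1⟩ := hx
    rcases le_total x (1/2) with h | h
    · have := hsym (1/2 - x) ⟨by linarith, by linarith⟩
      rw [sub_sub_cancel, show (1:ℝ)/2 + (1/2 - x) = 1 - x by ring] at this
      exact this.symm
    · have := hsym (x - 1/2) ⟨by linarith, by linarith⟩
      rwa [show (1:ℝ)/2 - (x - 1/2) = 1 - x by ring, add_sub_cancel] at this
  · have h1x : 1 - x ∉ Icc (0:ℝ) 1 := fun ⟨h0, h1⟩ => hx ⟨by linarith, by linarith⟩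
    rw [hf_supp _ hx, hf_supp _ h1x]

lemma MeasureTheory.MeasurePreserving.withDensity_of_comp_eq {α : Type*} [MeasurableSpace α] {μ : Measure α}
    {e : α ≃ᵐ α} (he : MeasurePreserving e μ μ) {g : α → ℝ≥0∞} (hg : ∀ x, g (e x) = g x) :
    MeasurePreserving e (μ.withDensity g) (μ.withDensity g) := by
  refine ⟨e.measurable, Measure.ext fun s hs => ?_⟩
  rw [Measure.map_apply e.measurable hs, withDensity_apply _ (e.measurable hs),
    withDensity_apply _ hs, ← he.setLIntegral_comp_preimage_emb e.measurableEmbedding g s]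
  simp only [hg]

lemma measure_eq_half_of_preimage_ae_eq_compl {α : Type*} [MeasurableSpace α] {μ : Measure α}
    [IsProbabilityMeasure μ] {r : α → α} (hr : MeasurePreserving r μ μ) {S : Set α}
    (hS : MeasurableSet S) (hrS : r ⁻¹' S =ᵐ[μ] Sᶜ) : μ S = 1/2 := by
  have hcompl : μ S = μ Sᶜ :=
    (hr.measure_preimage hS.nullMeasurableSet).symm.trans (measure_congr hrS)
  have htwice : 2 * μ S = 1 := by
    rw [two_mul, ← measure_univ (μ := μ), ← measure_add_measure_compl hS, ← hcompl]
  rw [ENNReal.eq_div_iff two_ne_zero ENNReal.ofNat_ne_top, htwice]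

theorem binDigit_bernoulli_half_of_symmetric_general
    {Ω : Type*} [MeasureSpace Ω] [IsProbabilityMeasure (ℙ : Measure Ω)]
    (X : Ω → ℝ) (hX : Measurable X) (f : ℝ → ℝ)
    (hf_supp : ∀ x, x ∉ Set.Icc (0:ℝ) 1 → f x = 0)
    (hlaw : Measure.map X ℙ = volume.withDensity (fun x => ENNReal.ofReal (f x)))
    (hsym : ∀ ε ∈ Set.Icc (0:ℝ) (1/2), f (1/2 - ε) = f (1/2 + ε)) :
    ∀ n : ℕ, 1 ≤ n → ℙ {ω | binDigit n (X ω) = 1} = 1/2 := by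
  intro n hn
  have hS : MeasurableSet {x | binDigit n x = 1} :=
    measurable_binDigit n (measurableSet_singleton 1)
  have : IsProbabilityMeasure (Measure.map X ℙ) :=
    Measure.isProbabilityMeasure_map hX.aemeasurable
  have hreflect : MeasurePreserving (fun x : ℝ => 1 - x) (Measure.map X ℙ) (Measure.map X ℙ) := by
    rw [hlaw]
    exact (Measure.measurePreserving_sub_left volume 1).withDensity_of_comp_eq
      (e := MeasurableEquiv.subLeft 1)
      fun x => congrArg ENNReal.ofReal (one_sub_comp_eq_of_symmetric hf_supp hsym x)
  have hflip := preimage_one_sub_binDigit_eq_one_ae_eq_compl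
    (hlaw ▸ withDensity_absolutelyContinuous _ _) (Nat.one_le_iff_ne_zero.mp hn)
  rw [← measure_eq_half_of_preimage_ae_eq_compl hreflect hS hflip, Measure.map_apply hX hS]
  rfl

/-- If `X` has a density `f` supported on `[0,1]` that is symmetric around `1/2`,
then every binary digit `B_n(X)` (for `n ≥ 1`) is Bernoulli(1/2). -/
theorem binDigit_bernoulli_half_of_symmetric
    {Ω : Type*} [MeasureSpace Ω] [IsProbabilityMeasure (ℙ : Measure Ω)]
    (X : Ω → ℝ) (hX : Measurable X) (f : ℝ → ℝ)
    (hf_nonneg : ∀ x, 0 ≤ f x)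
    (hf_supp : ∀ x, x ∉ Set.Icc (0:ℝ) 1 → f x = 0)
    (hlaw : Measure.map X ℙ = volume.withDensity (fun x => ENNReal.ofReal (f x)))
    (hsym : ∀ ε ∈ Set.Icc (0:ℝ) (1/2), f (1/2 - ε) = f (1/2 + ε)) :
    ∀ n : ℕ, 1 ≤ n → ℙ {ω | binDigit n (X ω) = 1} = 1/2 :=
  binDigit_bernoulli_half_of_symmetric_general X hX f hf_supp hlaw hsym
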